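/- arXiv:1111.1877 — 4 statements merged into one kernel-verified Lean document; each statement's English description precedes it below -/
import Mathlib

section
/- Let B be a complex symmetric n×n matrix with positive definite imaginary part Im B. Define the real 2n×2n matrix G = [[I,0],[−Re B, I]] · [[(Im B)⁻¹, 0],[0, Im B]] · [[I, −Re B],[0, I]] (in n×n block form). Then G is symmetric, positive definite, and symplectic in the sense that GΩG = Ω; consequently J := −ΩG satisfies J² = −I, JᵀΩJ = Ω, and ΩJ = G is positive definite, i.e. J is an Ω-compatible complex structure. -/
open Matrix

noncomputable section

/-- The standard symplectic matrix `Ω = [[0, −I],[I, 0]]` on `ℝ²ⁿ`. -/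
def Omg (n : ℕ) : Matrix (Fin n ⊕ Fin n) (Fin n ⊕ Fin n) ℝ :=
  fromBlocks 0 (-1) 1 0

/-- Componentwise real part of a complex matrix. -/
def matRe {m k : Type*} (A : Matrix m k ℂ) : Matrix m k ℝ := A.map Complex.re

/-- Componentwise imaginary part of a complex matrix. -/
def matIm {m k : Type*} (A : Matrix m k ℂ) : Matrix m k ℝ := A.map Complex.im

/-- The phase-space metric `G` associated with a complex symmetric matrix `B` with
`Im B > 0`, in `n×n` block form
`G = [[I,0],[−Re B, I]]·[[(Im B)⁻¹,0],[0, Im B]]·[[I,−Re B],[0,I]]`. -/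
def metricG {n : ℕ} (B : Matrix (Fin n) (Fin n) ℂ) :
    Matrix (Fin n ⊕ Fin n) (Fin n ⊕ Fin n) ℝ :=
  fromBlocks 1 0 (-(matRe B)) 1 * fromBlocks (matIm B)⁻¹ 0 0 (matIm B) *
    fromBlocks 1 (-(matRe B)) 0 1

/-!
Writing `X = Re B`, `Y = Im B` and `P = [[I, −X],[0, I]]`, the metric is the congruence
`G = Pᵀ · diag(Y⁻¹, Y) · P`. Since `Y` is positive definite, `G` is positive definite; since
`X` and `Y` are symmetric, both `P` and `diag(Y⁻¹, Y)` are symplectic, hence so is `G`. For a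
symmetric symplectic `G` the identity `GΩG = Ω` is `GᵀΩG = Ω`, `J = −ΩG` is a product of
symplectic matrices, and `J² = Ω(GΩG) = Ω² = −I`.
-/

theorem Matrix.PosDef.fromBlocks_zero_zero {m k R : Type*} [Fintype m] [Fintype k] [Ring R]
    [PartialOrder R] [StarRing R] [StarOrderedRing R] {A : Matrix m m R} {D : Matrix k k R}
    (hA : A.PosDef) (hD : D.PosDef) : (fromBlocks A 0 0 D).PosDef := by
  refine .of_dotProduct_mulVec_pos (hA.isHermitian.fromBlocks (by simp) hD.isHermitian) ?_
  intro x hx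
  have hsplit : x ∘ Sum.inl ≠ 0 ∨ x ∘ Sum.inr ≠ 0 := by
    by_contra! h
    exact hx (funext (Sum.rec (congrFun h.1) (congrFun h.2)))
  rw [fromBlocks_mulVec, dotProduct_block]
  simp only [Sum.elim_comp_inl, Sum.elim_comp_inr, zero_mulVec, add_zero, zero_add]
  rcases hsplit with h | h
  · exact add_pos_of_pos_of_nonneg (hA.dotProduct_mulVec_pos h)
      (hD.posSemidef.dotProduct_mulVec_nonneg _)
  · exact add_pos_of_nonneg_of_pos (hA.posSemidef.dotProduct_mulVec_nonneg _)
      (hD.dotProduct_mulVec_pos h)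

namespace SymplecticGroup

variable {l R : Type*} [DecidableEq l] [Fintype l] [CommRing R]

theorem fromBlocks_one_zero_one_mem {B : Matrix l l R} (hB : Bᵀ = B) :
    fromBlocks 1 B 0 1 ∈ symplecticGroup l R :=
  fromBlocks_mem_iff.mpr ⟨by simp, by simp [hB], by simp⟩

theorem fromBlocks_zero_zero_mem {A D : Matrix l l R} (h : Aᵀ * D = 1) :
    fromBlocks A 0 0 D ∈ symplecticGroup l R :=
  fromBlocks_mem_iff.mpr ⟨by simp, by simp, by simpa using h⟩

theorem neg_J_mul_mul_self {G : Matrix (l ⊕ l) (l ⊕ l) R} (h : G * J l R * G = J l R) :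
    (-J l R * G) * (-J l R * G) = -1 := by
  calc (-J l R * G) * (-J l R * G) = J l R * (G * J l R * G) := by noncomm_ring
    _ = -1 := by rw [h, J_squared]

end SymplecticGroup

theorem Omg_eq_J (n : ℕ) : Omg n = J (Fin n) ℝ := rfl

theorem matRe_transpose {m k : Type*} (A : Matrix m k ℂ) : matRe Aᵀ = (matRe A)ᵀ := rfl

theorem matIm_transpose {m k : Type*} (A : Matrix m k ℂ) : matIm Aᵀ = (matIm A)ᵀ := rfl

section metricG

variable {n : ℕ} {B : Matrix (Fin n) (Fin n) ℂ}

theorem metricG_eq_transpose_mul_mul (hB : Bᵀ = B) :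
    metricG B = (fromBlocks 1 (-matRe B) 0 1)ᵀ * fromBlocks (matIm B)⁻¹ 0 0 (matIm B) *
      fromBlocks 1 (-matRe B) 0 1 := by
  rw [metricG, fromBlocks_transpose, transpose_neg, ← matRe_transpose, hB]
  simp

theorem posDef_metricG (hB : Bᵀ = B) (hIm : (matIm B).PosDef) : (metricG B).PosDef := by
  have hP : IsUnit (fromBlocks 1 (-matRe B) 0 1 : Matrix (Fin n ⊕ Fin n) _ ℝ) :=
    isUnit_fromBlocks_zero₂₁.mpr ⟨isUnit_one, isUnit_one⟩
  rw [metricG_eq_transpose_mul_mul hB, ← conjTranspose_eq_transpose_of_trivial]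
  exact (hIm.inv.fromBlocks_zero_zero hIm).conjTranspose_mul_mul_same
    (mulVec_injective_of_isUnit hP)

theorem metricG_mem_symplecticGroup (hB : Bᵀ = B) (hIm : IsUnit (matIm B)) :
    metricG B ∈ symplecticGroup (Fin n) ℝ := by
  have hP : fromBlocks 1 (-matRe B) 0 1 ∈ symplecticGroup (Fin n) ℝ :=
    SymplecticGroup.fromBlocks_one_zero_one_mem (by rw [transpose_neg, ← matRe_transpose, hB])
  have hD : fromBlocks (matIm B)⁻¹ 0 0 (matIm B) ∈ symplecticGroup (Fin n) ℝ := by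
    refine SymplecticGroup.fromBlocks_zero_zero_mem ?_
    rw [transpose_nonsing_inv, ← matIm_transpose, hB]
    exact nonsing_inv_mul _ ((isUnit_iff_isUnit_det _).mp hIm)
  rw [metricG_eq_transpose_mul_mul hB]
  exact mul_mem (mul_mem (SymplecticGroup.transpose_mem hP) hD) hP

end metricG

/-- For a complex symmetric `n×n` matrix `B` with positive definite
imaginary part, the matrix `G` is symmetric, positive definite and symplectic
(`GΩG = Ω`), and `J := −ΩG` satisfies `J² = −I`, `JᵀΩJ = Ω`, and `ΩJ = G` is positive
definite; i.e. `J` is an `Ω`-compatible complex structure. -/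
theorem statement0 (n : ℕ) (B : Matrix (Fin n) (Fin n) ℂ)
    (hBsymm : Bᵀ = B) (hBim : (matIm B).PosDef) :
    (metricG B)ᵀ = metricG B ∧ (metricG B).PosDef ∧
      metricG B * Omg n * metricG B = Omg n ∧
      (-(Omg n) * metricG B) * (-(Omg n) * metricG B) = -1 ∧
      (-(Omg n) * metricG B)ᵀ * Omg n * (-(Omg n) * metricG B) = Omg n ∧
      Omg n * (-(Omg n) * metricG B) = metricG B ∧
      (Omg n * (-(Omg n) * metricG B)).PosDef := by
  rw [Omg_eq_J]
  have hG : (metricG B).PosDef := posDef_metricG hBsymm hBim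
  have hGt : (metricG B)ᵀ = metricG B := (isHermitian_iff_isSymm.mp hG.isHermitian).eq
  have hGsp : metricG B ∈ symplecticGroup (Fin n) ℝ :=
    metricG_mem_symplecticGroup hBsymm hBim.isUnit
  have hGJG : metricG B * J (Fin n) ℝ * metricG B = J (Fin n) ℝ := by
    simpa only [hGt] using SymplecticGroup.mem_iff'.mp hGsp
  have hJ : -J (Fin n) ℝ * metricG B ∈ symplecticGroup (Fin n) ℝ := by
    simpa only [neg_mul] using
      SymplecticGroup.neg_mem (mul_mem (SymplecticGroup.J_mem (Fin n) ℝ) hGsp)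
  have hJJ : J (Fin n) ℝ * (-J (Fin n) ℝ * metricG B) = metricG B := by
    rw [neg_mul, mul_neg, ← Matrix.mul_assoc, J_squared, neg_mul, one_mul, neg_neg]
  exact ⟨hGt, hG, hGJG, SymplecticGroup.neg_J_mul_mul_self hGJG,
    SymplecticGroup.mem_iff'.mp hJ, hJJ, hJJ.symm ▸ hG⟩
end
end

section
/- Let B be a complex symmetric n×n matrix with positive definite imaginary part, let z = (p,q) ∈ ℂⁿ×ℂⁿ, set (P,Q) := P_{J(B)}(z) = Re z + J(B) Im z, and set σ := ½(P+p)·(Q−q) ∈ ℂ. Then for every x ∈ ℝⁿ the complex quadratic phases satisfy p·(x−q) + ½(x−q)·B(x−q) = σ + P·(x−Q) + ½(x−Q)·B(x−Q); consequently, for every ħ > 0 the complexified coherent state satisfies ψ_z^B = e^{iσ/ħ} ψ_{(P,Q)}^B as functions on ℝⁿ. -/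
open Matrix

noncomputable section

/-- Componentwise real part of a complex vector. -/
def vecRe {m : Type*} (z : m → ℂ) : m → ℝ := fun i => (z i).re

/-- Componentwise imaginary part of a complex vector. -/
def vecIm {m : Type*} (z : m → ℂ) : m → ℝ := fun i => (z i).im

/-- The `Ω`-compatible complex structure `J(B)` associated with a complex symmetric
matrix `B` with `Im B > 0`, in `n×n` block form. -/
def JB {n : ℕ} (B : Matrix (Fin n) (Fin n) ℂ) :
    Matrix (Fin n ⊕ Fin n) (Fin n ⊕ Fin n) ℝ :=
  fromBlocks (-(matRe B) * (matIm B)⁻¹) (matIm B + matRe B * (matIm B)⁻¹ * matRe B)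
    (-(matIm B)⁻¹) ((matIm B)⁻¹ * matRe B)

/-- The projection `P_J(z) = Re z + J Im z` from `ℂ²ⁿ` to `ℝ²ⁿ`. -/
def PJ {n : ℕ} (J : Matrix (Fin n ⊕ Fin n) (Fin n ⊕ Fin n) ℝ)
    (z : Fin n ⊕ Fin n → ℂ) : Fin n ⊕ Fin n → ℝ :=
  vecRe z + J *ᵥ vecIm z

/-- The complexified coherent state `ψ_z^B` with (possibly complex) centre `z = (p,q)`:
`ψ_z^B(x) = (det Im B)^{1/4} (πħ)^{-n/4} exp[(i/ħ)(p·(x−q) + ½(x−q)·B(x−q))]`. -/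
def coherent {n : ℕ} (hbar : ℝ) (B : Matrix (Fin n) (Fin n) ℂ)
    (p q : Fin n → ℂ) (x : Fin n → ℝ) : ℂ :=
  (((matIm B).det ^ ((1 : ℝ)/4) / (Real.pi * hbar) ^ ((n : ℝ)/4) : ℝ) : ℂ) *
    Complex.exp ((Complex.I / (hbar : ℂ)) *
      (p ⬝ᵥ ((fun i => (x i : ℂ)) - q) +
        (1/2 : ℂ) * (((fun i => (x i : ℂ)) - q) ⬝ᵥ B *ᵥ ((fun i => (x i : ℂ)) - q))))

/-!
Write `B = S + iT`, `p = a + iα`, `q = b + iβ` and `w := T⁻¹(Sβ − α)`. Unfolding `J(B)` gives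
`Q = b + w` and `P = a + Sw + Tβ`, so `Q − q = w − iβ` and
`B(Q − q) = Sw + Tβ + i(Tw − Sβ) = Sw + Tβ − iα = P − p`. Thus the real centre `(P, Q)` satisfies
`P = p + B(Q − q)`, and for symmetric `B` expanding the quadratic phase around `Q` instead of `q`
produces exactly the constant `σ = ½(P + p)·(Q − q)`.
-/

section RealImagParts

variable {m ι : Type*}

lemma vecIm_sumElim_comp_inl {κ : Type*} (u : ι → ℂ) (v : κ → ℂ) :
    vecIm (Sum.elim u v) ∘ Sum.inl = vecIm u := rfl

lemma vecIm_sumElim_comp_inr {κ : Type*} (u : ι → ℂ) (v : κ → ℂ) :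
    vecIm (Sum.elim u v) ∘ Sum.inr = vecIm v := rfl

@[simp] lemma vecRe_add (u v : ι → ℂ) : vecRe (u + v) = vecRe u + vecRe v := rfl

@[simp] lemma vecIm_add (u v : ι → ℂ) : vecIm (u + v) = vecIm u + vecIm v := rfl

@[simp] lemma vecRe_sub (u v : ι → ℂ) : vecRe (u - v) = vecRe u - vecRe v := rfl

@[simp] lemma vecIm_sub (u v : ι → ℂ) : vecIm (u - v) = vecIm u - vecIm v := rfl

@[simp] lemma vecRe_ofReal (v : ι → ℝ) : vecRe (fun i => (v i : ℂ)) = v := rfl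

@[simp] lemma vecIm_ofReal (v : ι → ℝ) : vecIm (fun i => (v i : ℂ)) = 0 := by
  funext i
  simp [vecIm]

lemma ofReal_eq_of_vecRe_eq_of_vecIm_eq_zero {u : ι → ℂ} {v : ι → ℝ} (hre : vecRe u = v)
    (him : vecIm u = 0) : (fun i => (v i : ℂ)) = u := by
  funext i
  apply Complex.ext
  · exact (congrFun hre i).symm
  · exact (congrFun him i).symm

variable [Fintype ι]

lemma vecRe_mulVec (A : Matrix m ι ℂ) (u : ι → ℂ) :
    vecRe (A *ᵥ u) = matRe A *ᵥ vecRe u - matIm A *ᵥ vecIm u := by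
  funext i
  simp [vecRe, vecIm, matRe, matIm, mulVec, dotProduct, Complex.re_sum, Finset.sum_sub_distrib]

lemma vecIm_mulVec (A : Matrix m ι ℂ) (u : ι → ℂ) :
    vecIm (A *ᵥ u) = matRe A *ᵥ vecIm u + matIm A *ᵥ vecRe u := by
  funext i
  simp [vecRe, vecIm, matRe, matIm, mulVec, dotProduct, Complex.im_sum, Finset.sum_add_distrib,
    add_comm]

end RealImagParts

section Recentring

variable {n : ℕ} (B : Matrix (Fin n) (Fin n) ℂ) (p q : Fin n → ℂ)

lemma PJ_JB_inl :
    (fun i => PJ (JB B) (Sum.elim p q) (Sum.inl i)) =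
      vecRe p + matRe B *ᵥ ((matIm B)⁻¹ *ᵥ (matRe B *ᵥ vecIm q - vecIm p)) +
        matIm B *ᵥ vecIm q := by
  change vecRe p + (JB B *ᵥ vecIm (Sum.elim p q)) ∘ Sum.inl = _
  rw [JB, fromBlocks_mulVec, Sum.elim_comp_inl, vecIm_sumElim_comp_inl, vecIm_sumElim_comp_inr]
  simp only [mulVec_sub, mulVec_mulVec, neg_mul, neg_mulVec, add_mulVec, Matrix.mul_assoc]
  abel

lemma PJ_JB_inr :
    (fun i => PJ (JB B) (Sum.elim p q) (Sum.inr i)) =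
      vecRe q + (matIm B)⁻¹ *ᵥ (matRe B *ᵥ vecIm q - vecIm p) := by
  change vecRe q + (JB B *ᵥ vecIm (Sum.elim p q)) ∘ Sum.inr = _
  rw [JB, fromBlocks_mulVec, Sum.elim_comp_inr, vecIm_sumElim_comp_inl, vecIm_sumElim_comp_inr]
  simp only [mulVec_sub, mulVec_mulVec, neg_mulVec]
  abel

theorem ofReal_PJ_JB_inl_eq (hT : IsUnit (matIm B).det) :
    (fun i => (PJ (JB B) (Sum.elim p q) (Sum.inl i) : ℂ)) =
      p + B *ᵥ ((fun i => (PJ (JB B) (Sum.elim p q) (Sum.inr i) : ℂ)) - q) := by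
  set w := (matIm B)⁻¹ *ᵥ (matRe B *ᵥ vecIm q - vecIm p)
  have hTw : matIm B *ᵥ w = matRe B *ᵥ vecIm q - vecIm p := by
    rw [mulVec_mulVec, mul_nonsing_inv _ hT, one_mulVec]
  have hd_re : vecRe ((fun i => (PJ (JB B) (Sum.elim p q) (Sum.inr i) : ℂ)) - q) = w := by
    rw [vecRe_sub, vecRe_ofReal, PJ_JB_inr, add_sub_cancel_left]
  have hd_im : vecIm ((fun i => (PJ (JB B) (Sum.elim p q) (Sum.inr i) : ℂ)) - q) = -vecIm q := by
    rw [vecIm_sub, vecIm_ofReal, zero_sub]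
  apply ofReal_eq_of_vecRe_eq_of_vecIm_eq_zero
  · rw [vecRe_add, vecRe_mulVec, hd_re, hd_im, PJ_JB_inl, mulVec_neg, sub_neg_eq_add, add_assoc]
  · rw [vecIm_add, vecIm_mulVec, hd_re, hd_im, hTw, mulVec_neg]
    abel

end Recentring

section Phase

variable {ι K : Type*} [Fintype ι] [Field K] [CharZero K]

def phase (B : Matrix ι ι K) (p q x : ι → K) : K :=
  p ⬝ᵥ (x - q) + (1/2 : K) * ((x - q) ⬝ᵥ B *ᵥ (x - q))

theorem phase_eq_add_phase_of_eq_add_mulVec {B : Matrix ι ι K} (hB : Bᵀ = B)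
    {p q P Q : ι → K} (hP : P = p + B *ᵥ (Q - q)) (x : ι → K) :
    phase B p q x = (1/2 : K) * ((P + p) ⬝ᵥ (Q - q)) + phase B P Q x := by
  have hsymm (u v : ι → K) : u ⬝ᵥ B *ᵥ v = v ⬝ᵥ B *ᵥ u := by
    rw [dotProduct_mulVec, dotProduct_comm, ← mulVec_transpose, hB]
  have hsplit : x - q = (x - Q) + (Q - q) := (sub_add_sub_cancel x Q q).symm
  rw [phase, phase, hsplit, hP]
  simp only [dotProduct_add, add_dotProduct, mulVec_add]
  rw [dotProduct_comm (B *ᵥ _) (Q - q), dotProduct_comm (B *ᵥ _) (x - Q), hsymm (Q - q) (x - Q)]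
  ring

end Phase

theorem coherent_eq_exp_mul_coherent {n : ℕ} (hbar : ℝ) (B : Matrix (Fin n) (Fin n) ℂ)
    {p q P Q : Fin n → ℂ} {σ : ℂ} (x : Fin n → ℝ)
    (h : phase B p q (fun i => (x i : ℂ)) = σ + phase B P Q (fun i => (x i : ℂ))) :
    coherent hbar B p q x = Complex.exp (Complex.I * σ / hbar) * coherent hbar B P Q x := by
  rw [coherent, coherent, ← phase, ← phase, h, mul_add, Complex.exp_add, mul_div_right_comm]
  ring

/-- Let `B` be complex symmetric with `Im B` positive definite, let
`z = (p,q) ∈ ℂⁿ×ℂⁿ`, set `(P,Q) := P_{J(B)}(z) = Re z + J(B) Im z` and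
`σ := ½(P+p)·(Q−q)`. Then for every `x ∈ ℝⁿ` the complex quadratic phases satisfy
`p·(x−q) + ½(x−q)·B(x−q) = σ + P·(x−Q) + ½(x−Q)·B(x−Q)`; consequently for all `ħ > 0`,
`ψ_z^B = e^{iσ/ħ} ψ_{(P,Q)}^B` as functions on `ℝⁿ`. -/
theorem statement1 (n : ℕ) (B : Matrix (Fin n) (Fin n) ℂ)
    (hBsymm : Bᵀ = B) (hBim : (matIm B).PosDef) (p q : Fin n → ℂ)
    (P Q : Fin n → ℝ)
    (hP : P = fun i => PJ (JB B) (Sum.elim p q) (Sum.inl i))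
    (hQ : Q = fun i => PJ (JB B) (Sum.elim p q) (Sum.inr i))
    (σ : ℂ)
    (hσ : σ = (1/2 : ℂ) * (((fun i => (P i : ℂ)) + p) ⬝ᵥ ((fun i => (Q i : ℂ)) - q))) :
    (∀ x : Fin n → ℝ,
      p ⬝ᵥ ((fun i => (x i : ℂ)) - q) +
          (1/2 : ℂ) * (((fun i => (x i : ℂ)) - q) ⬝ᵥ B *ᵥ ((fun i => (x i : ℂ)) - q)) =
        σ + (fun i => (P i : ℂ)) ⬝ᵥ ((fun i => (x i : ℂ)) - fun i => (Q i : ℂ)) +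
          (1/2 : ℂ) * (((fun i => (x i : ℂ)) - fun i => (Q i : ℂ)) ⬝ᵥ B *ᵥ
            ((fun i => (x i : ℂ)) - fun i => (Q i : ℂ)))) ∧
    ∀ hbar : ℝ, 0 < hbar → ∀ x : Fin n → ℝ,
      coherent hbar B p q x =
        Complex.exp (Complex.I * σ / (hbar : ℂ)) *
          coherent hbar B (fun i => (P i : ℂ)) (fun i => (Q i : ℂ)) x := by
  have hdet : IsUnit (matIm B).det := hBim.det_pos.ne'.isUnit
  have hcentre : (fun i => (P i : ℂ)) = p + B *ᵥ ((fun i => (Q i : ℂ)) - q) := by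
    subst hP hQ
    exact ofReal_PJ_JB_inl_eq B p q hdet
  have hphase (x : Fin n → ℝ) : phase B p q (fun i => (x i : ℂ)) =
      σ + phase B (fun i => (P i : ℂ)) (fun i => (Q i : ℂ)) (fun i => (x i : ℂ)) := by
    rw [hσ]
    exact phase_eq_add_phase_of_eq_add_mulVec hBsymm hcentre _
  refine ⟨fun x => ?_, fun hbar _ x => coherent_eq_exp_mul_coherent hbar B x (hphase x)⟩
  rw [add_assoc]
  exact hphase x
end
end

section
/- Let J be an Ω-compatible complex structure, G := ΩJ, and define the hermitian sesquilinear form h(z,z') := z·G z̄' − i z·Ω z̄' on ℂ²ⁿ. Then P_J(z) := Re z + J Im z is a (real-linear, considered ℂ-antilinear-free) projection of ℂ²ⁿ onto ℝ²ⁿ whose kernel and image are h-orthogonal, i.e. h(z,z') = 0 for all z ∈ ker P_J and z' ∈ ℝ²ⁿ; consequently P_J is hermitian with respect to h: h(P_J z, z') = h(z, P_J z') for all z, z' ∈ ℂ²ⁿ. -/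
/-!
Write `h(z, z') = z ⬝ M z̄'` with `M = ΩJ − iΩ`. The relations `JᵀΩJ = Ω` and `J² = −1` give
`Jᵀ M = i M` and `M J = −i M`, i.e. `h(Jx, ·) = h(ix, ·)` and `h(·, Jx) = h(·, ix)` for real `x`.
Since `P_J(a + ib) = a + Jb`, this yields `h(P_J z, ·) = h(z, ·)` and `h(·, P_J z) = h(·, z)`,
from which both the orthogonality and the hermitian property follow.
-/

open Matrix

noncomputable section

/-- The complexification of `Ω`. -/
def OmgC (n : ℕ) : Matrix (Fin n ⊕ Fin n) (Fin n ⊕ Fin n) ℂ :=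
  (Omg n).map Complex.ofReal

/-- Coercion of a real vector into `ℂ²ⁿ`. -/
def cv {m : Type*} (x : m → ℝ) : m → ℂ := fun i => ((x i : ℝ) : ℂ)

/-- The hermitian sesquilinear form `h(z,z') := z·G z̄' − i z·Ω z̄'` on `ℂ²ⁿ`
associated with `G = ΩJ` (the bar is componentwise conjugation). -/
def hform {n : ℕ} (J : Matrix (Fin n ⊕ Fin n) (Fin n ⊕ Fin n) ℝ)
    (z z' : Fin n ⊕ Fin n → ℂ) : ℂ :=
  z ⬝ᵥ ((Omg n * J).map Complex.ofReal) *ᵥ star z' -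
    Complex.I * (z ⬝ᵥ OmgC n *ᵥ star z')

open Complex

section RealForm

variable {m : Type*}

lemma cv_zero : cv (0 : m → ℝ) = 0 := by
  funext i; simp [cv]

lemma cv_add (x y : m → ℝ) : cv (x + y) = cv x + cv y := by
  funext i; simp [cv]

lemma star_cv (x : m → ℝ) : star (cv x) = cv x := by
  funext i; simp [cv]

lemma cv_vecRe_add_I_smul_cv_vecIm (z : m → ℂ) : cv (vecRe z) + I • cv (vecIm z) = z := by
  funext i
  simp [cv, vecRe, vecIm, mul_comm I, re_add_im]

lemma star_eq_cv_vecRe_sub_I_smul_cv_vecIm (z : m → ℂ) :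
    star z = cv (vecRe z) - I • cv (vecIm z) := by
  funext i
  apply Complex.ext <;> simp [cv, vecRe, vecIm]

variable [Fintype m]

lemma map_ofReal_mul (A B : Matrix m m ℝ) :
    (A * B).map ofReal = A.map ofReal * B.map ofReal :=
  Matrix.map_mul (f := ofRealHom)

lemma cv_mulVec (K : Matrix m m ℝ) (x : m → ℝ) : cv (K *ᵥ x) = K.map ofReal *ᵥ cv x :=
  funext (RingHom.map_mulVec ofRealHom K x)

variable {K : Matrix m m ℝ} {A : Matrix m m ℂ}

lemma cv_mulVec_dotProduct_of_transpose_mul (hK : (K.map ofReal)ᵀ * A = I • A)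
    (x : m → ℝ) (w : m → ℂ) : cv (K *ᵥ x) ⬝ᵥ A *ᵥ w = I * (cv x ⬝ᵥ A *ᵥ w) := by
  rw [cv_mulVec, dotProduct_mulVec, ← vecMul_transpose, vecMul_vecMul,
    ← dotProduct_mulVec, hK, smul_mulVec, dotProduct_smul, smul_eq_mul]

lemma mulVec_cv_mulVec_of_mul (hK : A * K.map ofReal = -I • A) (x : m → ℝ) :
    A *ᵥ cv (K *ᵥ x) = -I • (A *ᵥ cv x) := by
  rw [cv_mulVec, mulVec_mulVec, hK, smul_mulVec]

lemma cv_vecRe_add_mulVec_vecIm_dotProduct (hK : (K.map ofReal)ᵀ * A = I • A)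
    (z w : m → ℂ) : cv (vecRe z + K *ᵥ vecIm z) ⬝ᵥ A *ᵥ w = z ⬝ᵥ A *ᵥ w := by
  conv_rhs => rw [← cv_vecRe_add_I_smul_cv_vecIm z]
  rw [cv_add, add_dotProduct, add_dotProduct, cv_mulVec_dotProduct_of_transpose_mul hK,
    smul_dotProduct, smul_eq_mul]

lemma mulVec_star_cv_vecRe_add_mulVec_vecIm (hK : A * K.map ofReal = -I • A) (z : m → ℂ) :
    A *ᵥ star (cv (vecRe z + K *ᵥ vecIm z)) = A *ᵥ star z := by
  rw [star_cv, star_eq_cv_vecRe_sub_I_smul_cv_vecIm, cv_add, mulVec_add, mulVec_sub,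
    mulVec_cv_mulVec_of_mul hK, mulVec_smul, neg_smul, sub_eq_add_neg]

end RealForm

section Symplectic

variable {n : ℕ} {J : Matrix (Fin n ⊕ Fin n) (Fin n ⊕ Fin n) ℝ}

def hformMatrix (J : Matrix (Fin n ⊕ Fin n) (Fin n ⊕ Fin n) ℝ) :
    Matrix (Fin n ⊕ Fin n) (Fin n ⊕ Fin n) ℂ :=
  (Omg n * J).map ofReal - I • OmgC n

lemma hform_eq_dotProduct_hformMatrix (z z' : Fin n ⊕ Fin n → ℂ) :
    hform J z z' = z ⬝ᵥ hformMatrix J *ᵥ star z' := by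
  rw [hform, hformMatrix, sub_mulVec, smul_mulVec, dotProduct_sub, dotProduct_smul, smul_eq_mul]

lemma transpose_mul_hformMatrix (hJsymp : Jᵀ * Omg n * J = Omg n) (hJsq : J * J = -1) :
    (J.map ofReal)ᵀ * hformMatrix J = I • hformMatrix J := by
  have hJtOmg : Jᵀ * Omg n = -(Omg n * J) := by
    rw [← neg_eq_iff_eq_neg, ← mul_neg_one, ← hJsq, ← mul_assoc, hJsymp]
  calc (J.map ofReal)ᵀ * hformMatrix J
      = (Jᵀ * (Omg n * J)).map ofReal - I • (Jᵀ * Omg n).map ofReal := by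
        rw [hformMatrix, OmgC, mul_sub, mul_smul_comm, ← transpose_map]
        simp only [map_ofReal_mul]
    _ = (Omg n).map ofReal + I • (Omg n * J).map ofReal := by
        rw [← mul_assoc, hJsymp, hJtOmg, Matrix.map_neg _ ofReal_neg, smul_neg, sub_neg_eq_add]
    _ = I • hformMatrix J := by
        rw [hformMatrix, OmgC, smul_sub, smul_smul, I_mul_I, neg_one_smul, sub_neg_eq_add,
          add_comm]

lemma hformMatrix_mul (hJsq : J * J = -1) :
    hformMatrix J * J.map ofReal = -I • hformMatrix J := by
  calc hformMatrix J * J.map ofReal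
      = (Omg n * J * J).map ofReal - I • (Omg n * J).map ofReal := by
        rw [hformMatrix, OmgC, sub_mul, smul_mul_assoc]
        simp only [map_ofReal_mul]
    _ = -I • hformMatrix J := by
        rw [mul_assoc, hJsq, mul_neg_one, Matrix.map_neg _ ofReal_neg, hformMatrix, OmgC,
          smul_sub, smul_smul, neg_mul, I_mul_I, neg_neg, one_smul, neg_smul]
        abel

lemma PJ_cv (x : Fin n ⊕ Fin n → ℝ) : PJ J (cv x) = x := by
  have hIm : vecIm (cv x) = 0 := by funext i; simp [vecIm, cv]
  funext i
  simp [PJ, hIm, vecRe, cv]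

lemma hform_cv_PJ_left (hJsymp : Jᵀ * Omg n * J = Omg n) (hJsq : J * J = -1)
    (z z' : Fin n ⊕ Fin n → ℂ) : hform J (cv (PJ J z)) z' = hform J z z' := by
  simp only [hform_eq_dotProduct_hformMatrix, PJ,
    cv_vecRe_add_mulVec_vecIm_dotProduct (transpose_mul_hformMatrix hJsymp hJsq)]

lemma hform_cv_PJ_right (hJsq : J * J = -1) (z z' : Fin n ⊕ Fin n → ℂ) :
    hform J z (cv (PJ J z')) = hform J z z' := by
  simp only [hform_eq_dotProduct_hformMatrix, PJ,
    mulVec_star_cv_vecRe_add_mulVec_vecIm (hformMatrix_mul hJsq)]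

end Symplectic

theorem statement8_general (n : ℕ) (J : Matrix (Fin n ⊕ Fin n) (Fin n ⊕ Fin n) ℝ)
    (hJsymp : Jᵀ * Omg n * J = Omg n) (hJsq : J * J = -1) :
    (∀ x : Fin n ⊕ Fin n → ℝ, PJ J (cv x) = x) ∧
    (∀ z : Fin n ⊕ Fin n → ℂ, PJ J (cv (PJ J z)) = PJ J z) ∧
    (∀ z : Fin n ⊕ Fin n → ℂ, PJ J z = 0 →
      ∀ x : Fin n ⊕ Fin n → ℝ, hform J z (cv x) = 0) ∧
    (∀ z z' : Fin n ⊕ Fin n → ℂ,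
      hform J (cv (PJ J z)) z' = hform J z (cv (PJ J z'))) := by
  refine ⟨PJ_cv, fun z => PJ_cv _, fun z hz x => ?_, fun z z' => ?_⟩
  · rw [← hform_cv_PJ_left hJsymp hJsq, hz, cv_zero, hform_eq_dotProduct_hformMatrix,
      zero_dotProduct]
  · rw [hform_cv_PJ_left hJsymp hJsq, hform_cv_PJ_right hJsq]

/-- Let `J` be an `Ω`-compatible complex structure, `G := ΩJ`, and
`h(z,z') := z·G z̄' − i z·Ω z̄'`. Then `P_J(z) := Re z + J Im z` is a real-linear
projection of `ℂ²ⁿ` onto `ℝ²ⁿ` (it is the identity on `ℝ²ⁿ`), its kernel and image are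
`h`-orthogonal (`h(z,z') = 0` for `z ∈ ker P_J` and `z' ∈ ℝ²ⁿ`), and consequently `P_J`
is hermitian with respect to `h`: `h(P_J z, z') = h(z, P_J z')` for all `z, z'`. -/
theorem statement8 (n : ℕ) (J : Matrix (Fin n ⊕ Fin n) (Fin n ⊕ Fin n) ℝ)
    (hJsymp : Jᵀ * Omg n * J = Omg n) (hJsq : J * J = -1)
    (hJpos : (Omg n * J).PosDef) :
    (∀ x : Fin n ⊕ Fin n → ℝ, PJ J (cv x) = x) ∧
    (∀ z : Fin n ⊕ Fin n → ℂ, PJ J (cv (PJ J z)) = PJ J z) ∧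
    (∀ z : Fin n ⊕ Fin n → ℂ, PJ J z = 0 →
      ∀ x : Fin n ⊕ Fin n → ℝ, hform J z (cv x) = 0) ∧
    (∀ z z' : Fin n ⊕ Fin n → ℂ,
      hform J (cv (PJ J z)) z' = hform J z (cv (PJ J z'))) :=
  statement8_general n J hJsymp hJsq
end
end

section
/- Let H = [[H_pp, H_pq],[H_qp, H_qq]] : I → M_{2n}(ℂ) be continuous and symmetric-valued on an interval I containing 0, let S : I → M_{2n}(ℂ) solve Ṡ = ΩHS with S(0) = I, and let B₀ be complex symmetric with positive definite imaginary part. Suppose that on a subinterval [0,T) the matrix S_qp(t)B₀ + S_qq(t) is invertible, and set B(t) := (S_pp(t)B₀ + S_pq(t))(S_qp(t)B₀ + S_qq(t))⁻¹. Then B(t) is differentiable on [0,T) and satisfies the matrix Riccati equation Ḃ = −H_qp B − B H_pq − H_qq − B H_pp B, with B(0) = B₀. -/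
open Matrix

noncomputable section

/-!
Write `S(t) [B₀; I] = [P(t); Q(t)]` (`frameP`, `frameQ`). Since `Ṡ = ΩHS`, the columns solve the
linear system `Ṗ = -H_qp P - H_qq Q`, `Q̇ = H_pp P + H_pq Q`. Differentiating `B = P Q⁻¹` with
`(Q⁻¹)' = -Q⁻¹ Q̇ Q⁻¹` gives `Ḃ = Ṗ Q⁻¹ - B Q̇ Q⁻¹`, and substituting the linear system turns this
into the Riccati right-hand side. Matrix-valued derivatives are taken for the `ℓ∞`-operator norm,
which makes square matrices a complete normed algebra; since all norms are equivalent this is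
the same as entrywise differentiability.
-/

section RingInverse

variable {R : Type*} [NormedRing R] [NormedAlgebra ℝ R] [HasSummableGeomSeries R]
  {s : Set ℝ} {t : ℝ}

theorem HasDerivWithinAt.ringInverse {V : ℝ → R} {V' : R} (hV : HasDerivWithinAt V V' s t)
    (hVt : IsUnit (V t)) :
    HasDerivWithinAt (fun x => Ring.inverse (V x))
      (-(Ring.inverse (V t) * V' * Ring.inverse (V t))) s t := by
  obtain ⟨u, hu⟩ := hVt
  have := (hu ▸ hasFDerivAt_ringInverse (𝕜 := ℝ) u).comp_hasDerivWithinAt t hV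
  simpa [← hu, Function.comp_def] using this

theorem HasDerivWithinAt.riccati_mul_ringInverse {U V : ℝ → R} {Hpp Hpq Hqp Hqq : R}
    (hU : HasDerivWithinAt U (-(Hqp * U t) - Hqq * V t) s t)
    (hV : HasDerivWithinAt V (Hpp * U t + Hpq * V t) s t) (hVt : IsUnit (V t)) :
    letI B := U t * Ring.inverse (V t)
    HasDerivWithinAt (fun x => U x * Ring.inverse (V x))
      (-(Hqp * B) - B * Hpq - Hqq - B * Hpp * B) s t := by
  refine (hU.mul (hV.ringInverse hVt)).congr_deriv ?_
  have hVV : V t * Ring.inverse (V t) = 1 := Ring.mul_inverse_cancel _ hVt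
  simp only [mul_add, add_mul, sub_mul, neg_mul, mul_neg, mul_assoc, hVV, mul_one]
  abel

end RingInverse

section MatrixDeriv

attribute [local instance] Matrix.linftyOpNormedAddCommGroup Matrix.linftyOpNormedSpace

variable {𝕜 α m n : Type*} [NontriviallyNormedField 𝕜] [NormedAddCommGroup α] [NormedSpace 𝕜 α]
  [Fintype m] [Fintype n] [DecidableEq m] [DecidableEq n]
  {f : 𝕜 → Matrix m n α} {f' : Matrix m n α} {s : Set 𝕜} {t : 𝕜}

theorem hasDerivWithinAt_matrix_iff :
    HasDerivWithinAt f f' s t ↔ ∀ i j, HasDerivWithinAt (fun x => f x i j) (f' i j) s t := by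
  refine ⟨fun h i j => ?_, fun h => ?_⟩
  · let entry : Matrix m n α →L[𝕜] α :=
      { toLinearMap := entryLinearMap 𝕜 α i j, cont := continuous_id.matrix_elem i j }
    exact entry.hasFDerivAt.comp_hasDerivWithinAt t h
  · let single (p : m × n) : α →L[𝕜] Matrix m n α :=
      { toLinearMap := singleLinearMap 𝕜 p.1 p.2
        cont := continuous_matrix fun i j => by
          change Continuous fun a : α => single p.1 p.2 a i j
          simp only [single_apply]
          exact continuous_id.if_const _ continuous_const }
    have := HasDerivWithinAt.fun_sum (u := Finset.univ) fun p _ =>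
      (single p).hasFDerivAt.comp_hasDerivWithinAt t (h p.1 p.2)
    change HasDerivWithinAt (fun x => ∑ p : m × n, Matrix.single p.1 p.2 (f x p.1 p.2))
      (∑ p : m × n, Matrix.single p.1 p.2 (f' p.1 p.2)) s t at this
    simpa only [Fintype.sum_prod_type, ← matrix_eq_sum_single] using this

variable {l o p q : Type*} [Fintype l] [Fintype o] [Fintype p] [Fintype q]
  [DecidableEq l] [DecidableEq o] [DecidableEq p] [DecidableEq q]
  {F : 𝕜 → Matrix (l ⊕ o) (p ⊕ q) α} {F' : Matrix (l ⊕ o) (p ⊕ q) α}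

theorem HasDerivWithinAt.toBlocks₁₁ (h : HasDerivWithinAt F F' s t) :
    HasDerivWithinAt (fun x => (F x).toBlocks₁₁) F'.toBlocks₁₁ s t :=
  hasDerivWithinAt_matrix_iff.2 fun i j => hasDerivWithinAt_matrix_iff.1 h (.inl i) (.inl j)

theorem HasDerivWithinAt.toBlocks₁₂ (h : HasDerivWithinAt F F' s t) :
    HasDerivWithinAt (fun x => (F x).toBlocks₁₂) F'.toBlocks₁₂ s t :=
  hasDerivWithinAt_matrix_iff.2 fun i j => hasDerivWithinAt_matrix_iff.1 h (.inl i) (.inr j)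

theorem HasDerivWithinAt.toBlocks₂₁ (h : HasDerivWithinAt F F' s t) :
    HasDerivWithinAt (fun x => (F x).toBlocks₂₁) F'.toBlocks₂₁ s t :=
  hasDerivWithinAt_matrix_iff.2 fun i j => hasDerivWithinAt_matrix_iff.1 h (.inr i) (.inl j)

theorem HasDerivWithinAt.toBlocks₂₂ (h : HasDerivWithinAt F F' s t) :
    HasDerivWithinAt (fun x => (F x).toBlocks₂₂) F'.toBlocks₂₂ s t :=
  hasDerivWithinAt_matrix_iff.2 fun i j => hasDerivWithinAt_matrix_iff.1 h (.inr i) (.inr j)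

end MatrixDeriv

theorem OmgC_eq_fromBlocks (n : ℕ) : OmgC n = fromBlocks 0 (-1) 1 0 := by
  ext (i | i) (j | j) <;> simp [OmgC, Omg, one_apply, apply_ite Complex.ofReal]

theorem OmgC_mul_mul_eq_fromBlocks (n : ℕ) (H S : Matrix (Fin n ⊕ Fin n) (Fin n ⊕ Fin n) ℂ) :
    OmgC n * H * S = fromBlocks
      (-(H.toBlocks₂₁ * S.toBlocks₁₁) - H.toBlocks₂₂ * S.toBlocks₂₁)
      (-(H.toBlocks₂₁ * S.toBlocks₁₂) - H.toBlocks₂₂ * S.toBlocks₂₂)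
      (H.toBlocks₁₁ * S.toBlocks₁₁ + H.toBlocks₁₂ * S.toBlocks₂₁)
      (H.toBlocks₁₁ * S.toBlocks₁₂ + H.toBlocks₁₂ * S.toBlocks₂₂) := by
  conv_lhs => rw [OmgC_eq_fromBlocks, ← fromBlocks_toBlocks H, ← fromBlocks_toBlocks S]
  rw [fromBlocks_multiply, fromBlocks_multiply]
  noncomm_ring

def frameP {n : ℕ} (S : Matrix (Fin n ⊕ Fin n) (Fin n ⊕ Fin n) ℂ)
    (B₀ : Matrix (Fin n) (Fin n) ℂ) : Matrix (Fin n) (Fin n) ℂ :=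
  S.toBlocks₁₁ * B₀ + S.toBlocks₁₂

def frameQ {n : ℕ} (S : Matrix (Fin n ⊕ Fin n) (Fin n ⊕ Fin n) ℂ)
    (B₀ : Matrix (Fin n) (Fin n) ℂ) : Matrix (Fin n) (Fin n) ℂ :=
  S.toBlocks₂₁ * B₀ + S.toBlocks₂₂

section FrameDeriv

attribute [local instance] Matrix.linftyOpNormedAddCommGroup Matrix.linftyOpNormedSpace

variable {n : ℕ} {S : ℝ → Matrix (Fin n ⊕ Fin n) (Fin n ⊕ Fin n) ℂ}
  {H : Matrix (Fin n ⊕ Fin n) (Fin n ⊕ Fin n) ℂ} {B₀ : Matrix (Fin n) (Fin n) ℂ}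
  {s : Set ℝ} {t : ℝ}

theorem hasDerivWithinAt_frameP (hS : HasDerivWithinAt S (OmgC n * H * S t) s t) :
    HasDerivWithinAt (fun x => frameP (S x) B₀)
      (-(H.toBlocks₂₁ * frameP (S t) B₀) - H.toBlocks₂₂ * frameQ (S t) B₀) s t := by
  let : NormedRing (Matrix (Fin n) (Fin n) ℂ) := Matrix.linftyOpNormedRing
  let : NormedAlgebra ℝ (Matrix (Fin n) (Fin n) ℂ) := Matrix.linftyOpNormedAlgebra
  rw [OmgC_mul_mul_eq_fromBlocks] at hS
  refine ((hS.toBlocks₁₁.mul_const B₀).add hS.toBlocks₁₂).congr_deriv ?_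
  simp only [toBlocks_fromBlocks₁₁, toBlocks_fromBlocks₁₂, frameP, frameQ]
  noncomm_ring

theorem hasDerivWithinAt_frameQ (hS : HasDerivWithinAt S (OmgC n * H * S t) s t) :
    HasDerivWithinAt (fun x => frameQ (S x) B₀)
      (H.toBlocks₁₁ * frameP (S t) B₀ + H.toBlocks₁₂ * frameQ (S t) B₀) s t := by
  let : NormedRing (Matrix (Fin n) (Fin n) ℂ) := Matrix.linftyOpNormedRing
  let : NormedAlgebra ℝ (Matrix (Fin n) (Fin n) ℂ) := Matrix.linftyOpNormedAlgebra
  rw [OmgC_mul_mul_eq_fromBlocks] at hS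
  refine ((hS.toBlocks₂₁.mul_const B₀).add hS.toBlocks₂₂).congr_deriv ?_
  simp only [toBlocks_fromBlocks₂₁, toBlocks_fromBlocks₂₂, frameP, frameQ]
  noncomm_ring

theorem hasDerivWithinAt_riccati_of_frame
    (hS : ∀ i j, HasDerivWithinAt (fun x => S x i j) ((OmgC n * H * S t) i j) s t)
    (hQ : IsUnit (frameQ (S t) B₀)) {B : ℝ → Matrix (Fin n) (Fin n) ℂ}
    (hB : ∀ x, B x = frameP (S x) B₀ * (frameQ (S x) B₀)⁻¹) (i j : Fin n) :
    HasDerivWithinAt (fun x => B x i j)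
      ((-(H.toBlocks₂₁ * B t) - B t * H.toBlocks₁₂ - H.toBlocks₂₂ -
        B t * H.toBlocks₁₁ * B t) i j) s t := by
  let : NormedRing (Matrix (Fin n) (Fin n) ℂ) := Matrix.linftyOpNormedRing
  let : NormedAlgebra ℝ (Matrix (Fin n) (Fin n) ℂ) := Matrix.linftyOpNormedAlgebra
  have hS' := hasDerivWithinAt_matrix_iff.2 hS
  have hB' : ∀ x, B x = frameP (S x) B₀ * Ring.inverse (frameQ (S x) B₀) := fun x => by
    rw [hB, nonsing_inv_eq_ringInverse]
  -- `V` is given explicitly: inferring it by higher-order unification times out.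
  have hBt := (hasDerivWithinAt_frameP hS').riccati_mul_ringInverse
    (V := fun x => frameQ (S x) B₀) (hasDerivWithinAt_frameQ hS') hQ
  rw [← hB' t] at hBt
  exact hasDerivWithinAt_matrix_iff.1 (hBt.congr (fun x _ => hB' x) (hB' t)) i j

end FrameDeriv

theorem statement13_general (n : ℕ) (I : Set ℝ)
    (T : ℝ) (hTI : Set.Ico (0 : ℝ) T ⊆ I)
    (H S : ℝ → Matrix (Fin n ⊕ Fin n) (Fin n ⊕ Fin n) ℂ)
    (hS : ∀ t ∈ I, ∀ i j,
      HasDerivWithinAt (fun s => S s i j) ((OmgC n * H t * S t) i j) I t)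
    (hS0 : S 0 = 1)
    (B₀ : Matrix (Fin n) (Fin n) ℂ)
    (hinv : ∀ t ∈ Set.Ico (0 : ℝ) T,
      IsUnit ((S t).toBlocks₂₁ * B₀ + (S t).toBlocks₂₂))
    (B : ℝ → Matrix (Fin n) (Fin n) ℂ)
    (hB : ∀ t, B t = ((S t).toBlocks₁₁ * B₀ + (S t).toBlocks₁₂) *
      ((S t).toBlocks₂₁ * B₀ + (S t).toBlocks₂₂)⁻¹) :
    B 0 = B₀ ∧
    ∀ t ∈ Set.Ico (0 : ℝ) T, ∀ i j,
      HasDerivWithinAt (fun s => B s i j)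
        ((-((H t).toBlocks₂₁ * B t) - B t * (H t).toBlocks₁₂ - (H t).toBlocks₂₂ -
          B t * (H t).toBlocks₁₁ * B t) i j)
        (Set.Ico (0 : ℝ) T) t := by
  refine ⟨?_, fun t ht => ?_⟩
  · rw [hB, hS0, ← fromBlocks_one]
    simp only [toBlocks_fromBlocks₁₁, toBlocks_fromBlocks₁₂, toBlocks_fromBlocks₂₁,
      toBlocks_fromBlocks₂₂, Matrix.one_mul, Matrix.zero_mul, add_zero, zero_add, inv_one,
      Matrix.mul_one]
  · exact hasDerivWithinAt_riccati_of_frame (fun i j => (hS t (hTI ht) i j).mono hTI)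
      (hinv t ht) hB

/-- Let `H` be continuous and symmetric-valued on an interval `I`
containing `0`, let `S` solve `Ṡ = ΩHS`, `S(0) = I`, and let `B₀` be complex symmetric
with positive definite imaginary part. If `S_qp(t)B₀ + S_qq(t)` is invertible on
`[0,T) ⊆ I`, then `B(t) := (S_pp(t)B₀ + S_pq(t))(S_qp(t)B₀ + S_qq(t))⁻¹` is
differentiable on `[0,T)` and satisfies the matrix Riccati equation
`Ḃ = −H_qp B − B H_pq − H_qq − B H_pp B` with `B(0) = B₀`. -/
theorem statement13 (n : ℕ) (I : Set ℝ) (hI : I.OrdConnected) (h0I : (0 : ℝ) ∈ I)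
    (T : ℝ) (hTI : Set.Ico (0 : ℝ) T ⊆ I)
    (H S : ℝ → Matrix (Fin n ⊕ Fin n) (Fin n ⊕ Fin n) ℂ)
    (hHcont : ∀ i j, ContinuousOn (fun t => H t i j) I)
    (hHsymm : ∀ t ∈ I, (H t)ᵀ = H t)
    (hS : ∀ t ∈ I, ∀ i j,
      HasDerivWithinAt (fun s => S s i j) ((OmgC n * H t * S t) i j) I t)
    (hS0 : S 0 = 1)
    (B₀ : Matrix (Fin n) (Fin n) ℂ) (hB₀symm : B₀ᵀ = B₀) (hB₀im : (matIm B₀).PosDef)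
    (hinv : ∀ t ∈ Set.Ico (0 : ℝ) T,
      IsUnit ((S t).toBlocks₂₁ * B₀ + (S t).toBlocks₂₂))
    (B : ℝ → Matrix (Fin n) (Fin n) ℂ)
    (hB : ∀ t, B t = ((S t).toBlocks₁₁ * B₀ + (S t).toBlocks₁₂) *
      ((S t).toBlocks₂₁ * B₀ + (S t).toBlocks₂₂)⁻¹) :
    B 0 = B₀ ∧
    ∀ t ∈ Set.Ico (0 : ℝ) T, ∀ i j,
      HasDerivWithinAt (fun s => B s i j)
        ((-((H t).toBlocks₂₁ * B t) - B t * (H t).toBlocks₁₂ - (H t).toBlocks₂₂ -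
          B t * (H t).toBlocks₁₁ * B t) i j)
        (Set.Ico (0 : ℝ) T) t :=
  statement13_general n I T hTI H S hS hS0 B₀ hinv B hB
end
end
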